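/- Every t-matrix admits a tensor singular value decomposition (TSVD): for every X ∈ C^{D₁×D₂}, setting Q = min(D₁, D₂), there exist t-matrices U ∈ C^{D₁×Q}, V ∈ C^{D₂×Q} and nonnegative t-scalars λ₁,…,λ_Q such that X = U ∘ diag(λ₁,…,λ_Q) ∘ Vᴴ, Uᴴ ∘ U = Vᴴ ∘ V = I (the Q×Q identity t-matrix), and F(λ₁)(i) ≥ F(λ₂)(i) ≥ ⋯ ≥ F(λ_Q)(i) ≥ 0 for every i ∈ G. -/

import Mathlib

/-!
The Fourier transform on `G` turns convolution into pointwise multiplication and `conj` into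
complex conjugation, and it is invertible. Hence a t-matrix is determined by its Fourier slices,
and t-matrix products, conjugate transposes, diagonal and identity t-matrices are all computed
slice by slice. A TSVD is therefore assembled, by inverse Fourier transform, from ordinary thin
SVDs of the slices with decreasingly sorted singular values; `λ_k` is nonnegative because its
transform is real and nonnegative, so the inverse transform of its pointwise square root is a
self-conjugate square root of it.

The thin SVD of a matrix `M` with at least as many rows as columns comes from a sorted unitary
diagonalization `V` of `Mᴴ M`: the columns of `M V` are then pairwise orthogonal, and normalizing
the nonzero ones and completing by Gram–Schmidt gives `U`.
-/

open scoped BigOperators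
open scoped Classical

noncomputable section

variable {N : ℕ}

/-- The underlying group `G = ZMod I₁ × ⋯ × ZMod I_N`. -/
abbrev G (I : Fin N → ℕ) : Type := ∀ n : Fin N, ZMod (I n)

/-- A t-scalar is a function `G → ℂ`. -/
abbrev TS (I : Fin N → ℕ) : Type := G I → ℂ

variable {I : Fin N → ℕ} [∀ n, NeZero (I n)]

/-- Circular convolution product of t-scalars. -/
def tconv (X Y : TS I) : TS I := fun i => ∑ j, X (i - j) * Y j

/-- The zero t-scalar. -/
def ZT : TS I := fun _ => 0

/-- The identity t-scalar: the indicator function of `0 ∈ G`. -/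
def ET : TS I := fun i => if i = 0 then 1 else 0

/-- The Fourier transform of a t-scalar:
`F(X)(i) = Σ_j X(j)·exp(2π√−1·Σ_n i_n·j_n / I_n)`. -/
def tfourier (X : TS I) : TS I :=
  fun i => ∑ j, X j * Complex.exp (2 * Real.pi * Complex.I *
      ∑ n, ((i n).val : ℂ) * ((j n).val : ℂ) / ((I n : ℕ) : ℂ))

/-- Conjugate of a t-scalar: `conj(X)(i) = complex conjugate of X(−i)`. -/
def tconj (X : TS I) : TS I := fun i => starRingEnd ℂ (X (-i))

/-- A t-scalar is self-conjugate if `X = conj(X)`. -/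
def SelfConj (X : TS I) : Prop := X = tconj X

/-- Real part `Re(X) = 2⁻¹(X + conj X)` of a t-scalar. -/
def tRe (X : TS I) : TS I := fun i => (X i + tconj X i) / 2

/-- Imaginary part `Im(X) = (2√−1)⁻¹(X − conj X)` of a t-scalar. -/
def tIm (X : TS I) : TS I := fun i => (X i - tconj X i) / (2 * Complex.I)

/-- A t-scalar is nonnegative if it is `Y ∘ Y` for some self-conjugate `Y`. -/
def TNonneg (X : TS I) : Prop := ∃ Y : TS I, SelfConj Y ∧ X = tconv Y Y

/-- A t-scalar is invertible if `X ∘ Y = E_T` for some `Y`. -/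
def TInv (X : TS I) : Prop := ∃ Y : TS I, tconv X Y = ET

/-- t-matrix multiplication: entrywise convolution products. -/
def tmul {a b c : ℕ} (A : Matrix (Fin a) (Fin b) (TS I)) (B : Matrix (Fin b) (Fin c) (TS I)) :
    Matrix (Fin a) (Fin c) (TS I) :=
  Matrix.of fun α γ => ∑ β, tconv (A α β) (B β γ)

/-- Conjugate transpose of a t-matrix. -/
def htrans {a b : ℕ} (A : Matrix (Fin a) (Fin b) (TS I)) : Matrix (Fin b) (Fin a) (TS I) :=
  Matrix.of fun β α => tconj (A α β)

/-- The identity t-matrix. -/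
def tId (Q : ℕ) : Matrix (Fin Q) (Fin Q) (TS I) :=
  Matrix.of fun α β => if α = β then ET else ZT

/-- Diagonal t-matrix with the given t-scalar diagonal entries. -/
def tdiag {Q : ℕ} (lam : Fin Q → TS I) : Matrix (Fin Q) (Fin Q) (TS I) :=
  Matrix.of fun k l => if k = l then lam k else ZT

/-- The `i`-th Fourier fslice of a t-matrix. -/
def fslice {a b : ℕ} (A : Matrix (Fin a) (Fin b) (TS I)) (i : G I) :
    Matrix (Fin a) (Fin b) ℂ :=
  Matrix.of fun α β => tfourier (A α β) i

/-- Frobenius norm of a complex matrix. -/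
def frob {a b : ℕ} (M : Matrix (Fin a) (Fin b) ℂ) : ℝ :=
  Real.sqrt (∑ α, ∑ β, Complex.normSq (M α β))

section SingularValueDecomposition

open Matrix InnerProductSpace Module

variable {𝕜 E : Type*} [RCLike 𝕜] [NormedAddCommGroup E] [InnerProductSpace 𝕜 E]

theorem Pairwise.inner_extend_eq_zero {ι κ : Type*} {e : ι ↪ κ} {f : ι → E}
    (hf : Pairwise fun i j => inner 𝕜 (f i) (f j) = 0) :
    Pairwise fun a b => inner 𝕜 (Function.extend e f 0 a) (Function.extend e f 0 b) = 0 := by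
  intro a b hab
  by_cases ha : ∃ i, e i = a
  · by_cases hb : ∃ j, e j = b
    · obtain ⟨i, rfl⟩ := ha
      obtain ⟨j, rfl⟩ := hb
      rw [e.injective.extend_apply, e.injective.extend_apply]
      exact hf (ne_of_apply_ne e hab)
    · simp [Function.extend_apply' _ _ _ hb]
  · simp [Function.extend_apply' _ _ _ ha]

theorem exists_orthonormalBasis_eq_norm_smul_comp [FiniteDimensional 𝕜 E] {ι κ : Type*}
    [Fintype κ] [LinearOrder κ] [LocallyFiniteOrderBot κ] (e : ι ↪ κ)
    (h : finrank 𝕜 E = Fintype.card κ) (f : ι → E)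
    (hf : Pairwise fun i j => inner 𝕜 (f i) (f j) = 0) :
    ∃ u : OrthonormalBasis κ 𝕜 E, ∀ i, f i = (‖f i‖ : 𝕜) • u (e i) := by
  refine ⟨gramSchmidtOrthonormalBasis h (Function.extend e f 0), fun i => ?_⟩
  have hfi : Function.extend e f 0 (e i) = f i := e.injective.extend_apply f 0 i
  by_cases hi : f i = 0
  · simp [hi]
  · rw [gramSchmidtOrthonormalBasis_apply_of_orthogonal h hf.inner_extend_eq_zero (hfi ▸ hi),
      hfi, smul_smul, mul_inv_cancel₀ (by simpa using hi), one_smul]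

namespace Matrix

variable {m n : Type*} [Fintype m]

theorem gram_toLp_col (B : Matrix m n 𝕜) :
    gram 𝕜 (fun k => WithLp.toLp 2 (B.col k)) = Bᴴ * B := by
  ext j k
  simp [mul_apply, EuclideanSpace.inner_eq_star_dotProduct, dotProduct, mul_comm]

theorem conjTranspose_mul_self_eq_one_of_orthonormal [Fintype n] [DecidableEq n]
    {u : n → EuclideanSpace 𝕜 m} (hu : Orthonormal 𝕜 u) :
    ((of fun k => ⇑(u k))ᵀ)ᴴ * (of fun k => ⇑(u k))ᵀ = 1 := by
  rw [← gram_toLp_col]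
  simpa using hu

theorem exists_eq_isometry_mul_diagonal_of_isDiag [Fintype n] [DecidableEq n] [LinearOrder m]
    [LocallyFiniteOrderBot m] (e : n ↪ m) (B : Matrix m n 𝕜) (hB : (Bᴴ * B).IsDiag) :
    ∃ U : Matrix m n 𝕜, Uᴴ * U = 1 ∧
      B = U * diagonal fun k => (‖WithLp.toLp 2 (B.col k)‖ : 𝕜) := by
  have horth : Pairwise fun j k =>
      inner 𝕜 (WithLp.toLp 2 (B.col j)) (WithLp.toLp 2 (B.col k)) = 0 := fun j k hjk => by
    simpa [← gram_toLp_col] using hB hjk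
  obtain ⟨u, hu⟩ := exists_orthonormalBasis_eq_norm_smul_comp e (by simp) _ horth
  refine ⟨(of fun k => ⇑(u (e k)))ᵀ,
    conjTranspose_mul_self_eq_one_of_orthonormal (u.orthonormal.comp e e.injective), ?_⟩
  ext α k
  simpa [mul_diagonal, mul_comm, RCLike.real_smul_eq_coe_mul] using congr_arg (· α) (hu k)

theorem IsHermitian.exists_sorted_diagonalization {k : ℕ} {A : Matrix (Fin k) (Fin k) 𝕜}
    (hA : A.IsHermitian) :
    ∃ (V : Matrix (Fin k) (Fin k) 𝕜) (μ : Fin k → ℝ),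
      Vᴴ * V = 1 ∧ Antitone μ ∧ A * V = V * diagonal fun j => (μ j : 𝕜) := by
  have hT := isSymmetric_toEuclideanLin_iff.mpr hA
  have hk : finrank 𝕜 (EuclideanSpace 𝕜 (Fin k)) = k := finrank_euclideanSpace_fin
  refine ⟨(of fun j => ⇑(hT.eigenvectorBasis hk j))ᵀ, hT.eigenvalues hk,
    conjTranspose_mul_self_eq_one_of_orthonormal (hT.eigenvectorBasis hk).orthonormal,
    hT.eigenvalues_antitone hk, ?_⟩
  ext α j
  have := congr_arg (· α) (hT.apply_eigenvectorBasis hk j)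
  simp only [ofLp_toLpLin, toLin'_apply, PiLp.smul_apply, smul_eq_mul] at this
  rw [mul_diagonal, mul_comm]
  exact this

theorem exists_svd_of_le {m n : ℕ} (h : n ≤ m) (M : Matrix (Fin m) (Fin n) 𝕜) :
    ∃ (U : Matrix (Fin m) (Fin n) 𝕜) (V : Matrix (Fin n) (Fin n) 𝕜) (σ : Fin n → ℝ),
      M = U * diagonal (fun k => (σ k : 𝕜)) * Vᴴ ∧ Uᴴ * U = 1 ∧ Vᴴ * V = 1 ∧
        Antitone σ ∧ 0 ≤ σ := by
  obtain ⟨V, μ, hV, hμ, hMV⟩ :=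
    (isHermitian_conjTranspose_mul_self M).exists_sorted_diagonalization
  have hgram : (M * V)ᴴ * (M * V) = diagonal fun k => (μ k : 𝕜) := by
    rw [conjTranspose_mul, Matrix.mul_assoc, ← Matrix.mul_assoc Mᴴ, hMV, ← Matrix.mul_assoc, hV,
      Matrix.one_mul]
  obtain ⟨U, hU, hUσ⟩ :=
    exists_eq_isometry_mul_diagonal_of_isDiag (Fin.castLEEmb h) (M * V) (hgram ▸ isDiag_diagonal _)
  have hσμ : ∀ k, ‖WithLp.toLp 2 ((M * V).col k)‖ ^ 2 = μ k := fun k => by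
    have := congr_fun₂ ((gram_toLp_col (M * V)).trans hgram) k k
    simp only [gram_apply, inner_self_eq_norm_sq_to_K, diagonal_apply_eq] at this
    exact_mod_cast this
  refine ⟨U, V, fun k => ‖WithLp.toLp 2 ((M * V).col k)‖, ?_, hU, hV, fun j k hjk => ?_,
    fun k => norm_nonneg _⟩
  · rw [← hUσ, Matrix.mul_assoc, mul_eq_one_comm.mp hV, Matrix.mul_one]
  · rw [← pow_le_pow_iff_left₀ (norm_nonneg _) (norm_nonneg _) two_ne_zero, hσμ, hσμ]
    exact hμ hjk

theorem exists_svd {m n : ℕ} (M : Matrix (Fin m) (Fin n) 𝕜) :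
    ∃ (U : Matrix (Fin m) (Fin (min m n)) 𝕜) (V : Matrix (Fin n) (Fin (min m n)) 𝕜)
      (σ : Fin (min m n) → ℝ),
      M = U * diagonal (fun k => (σ k : 𝕜)) * Vᴴ ∧ Uᴴ * U = 1 ∧ Vᴴ * V = 1 ∧
        Antitone σ ∧ 0 ≤ σ := by
  rcases le_total n m with h | h
  · rw [min_eq_right h]
    exact exists_svd_of_le h M
  · rw [min_eq_left h]
    obtain ⟨U, V, σ, hM, hU, hV, hσ, hσ0⟩ := exists_svd_of_le h Mᴴ
    refine ⟨V, U, σ, ?_, hV, hU, hσ, hσ0⟩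
    rw [← conjTranspose_conjTranspose M, hM]
    simp [conjTranspose_mul, Matrix.mul_assoc, Pi.star_def]

end Matrix

end SingularValueDecomposition

open scoped ComplexConjugate

def tchar (i j : G I) : ℂ := ∏ n, ZMod.stdAddChar (i n * j n)

lemma tchar_comm (i j : G I) : tchar i j = tchar j i := by
  simp [tchar, mul_comm]

lemma tchar_add_left (i i' j : G I) : tchar (i + i') j = tchar i j * tchar i' j := by
  simp [tchar, add_mul, AddChar.map_add_eq_mul, Finset.prod_mul_distrib]

lemma tchar_add_right (i j j' : G I) : tchar i (j + j') = tchar i j * tchar i j' := by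
  simp [tchar, mul_add, AddChar.map_add_eq_mul, Finset.prod_mul_distrib]

lemma tchar_neg_left (i j : G I) : tchar (-i) j = conj (tchar i j) := by
  simp [tchar, map_prod, ← AddChar.map_neg_eq_conj]

lemma sum_tchar (i : G I) : ∑ j, tchar i j = if i = 0 then (Fintype.card (G I) : ℂ) else 0 := by
  have hfactor (n : Fin N) : ∑ x : ZMod (I n), ZMod.stdAddChar (i n * x)
      = if i n = 0 then ((I n : ℕ) : ℂ) else 0 := by
    simpa [mul_comm, ZMod.card] using
      AddChar.sum_mulShift (i n) (ZMod.isPrimitive_stdAddChar (I n))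
  unfold tchar
  rw [← Fintype.prod_sum (fun n x => ZMod.stdAddChar (i n * x))]
  simp only [hfactor, Finset.prod_ite_zero, Finset.mem_univ, true_implies, Fintype.card_pi,
    ZMod.card, Nat.cast_prod, funext_iff, Pi.zero_apply]

lemma sum_tchar_mul_conj (i k : G I) :
    ∑ j, tchar i j * conj (tchar k j) = if i = k then (Fintype.card (G I) : ℂ) else 0 := by
  simp_rw [← tchar_neg_left, ← tchar_add_left, ← sub_eq_add_neg, sum_tchar, sub_eq_zero]

lemma tfourier_eq_sum (X : TS I) (i : G I) : tfourier X i = ∑ j, X j * tchar i j := by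
  unfold tfourier
  refine Finset.sum_congr rfl fun j _ => ?_
  rw [Finset.mul_sum, Complex.exp_sum, tchar]
  congr 1
  refine Finset.prod_congr rfl fun n _ => ?_
  have hx : i n * j n = ((((i n).val * (j n).val : ℕ) : ℤ) : ZMod (I n)) := by
    push_cast [ZMod.natCast_zmod_val]
    rfl
  rw [hx, ZMod.stdAddChar_coe]
  congr 1
  push_cast
  ring

lemma card_G_ne_zero : (Fintype.card (G I) : ℂ) ≠ 0 :=
  Nat.cast_ne_zero.mpr Fintype.card_ne_zero

def tifourier (g : TS I) : TS I :=
  fun j => (Fintype.card (G I) : ℂ)⁻¹ * ∑ i, g i * conj (tchar i j)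

lemma tfourier_tifourier (g : TS I) : tfourier (tifourier g) = g := by
  funext i
  calc tfourier (tifourier g) i
      = (Fintype.card (G I) : ℂ)⁻¹ * ∑ k, g k * ∑ j, tchar i j * conj (tchar k j) := by
        simp only [tfourier_eq_sum, tifourier, Finset.mul_sum, Finset.sum_mul]
        rw [Finset.sum_comm]
        exact Finset.sum_congr rfl fun k _ => Finset.sum_congr rfl fun j _ => by ring
    _ = g i := by
        simp only [sum_tchar_mul_conj, mul_ite, mul_zero, Finset.sum_ite_eq, Finset.mem_univ,
          if_true]
        rw [mul_comm (g i), inv_mul_cancel_left₀ card_G_ne_zero]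

lemma tifourier_tfourier (X : TS I) : tifourier (tfourier X) = X := by
  funext j
  calc tifourier (tfourier X) j
      = (Fintype.card (G I) : ℂ)⁻¹ * ∑ k, X k * ∑ i, tchar k i * conj (tchar j i) := by
        simp only [tfourier_eq_sum, tifourier, Finset.mul_sum, Finset.sum_mul]
        rw [Finset.sum_comm]
        refine Finset.sum_congr rfl fun k _ => Finset.sum_congr rfl fun i _ => ?_
        rw [tchar_comm i k, tchar_comm i j]
        ring
    _ = X j := by
        simp only [sum_tchar_mul_conj, mul_ite, mul_zero, Finset.sum_ite_eq', Finset.mem_univ,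
          if_true]
        rw [mul_comm (X j), inv_mul_cancel_left₀ card_G_ne_zero]

lemma tfourier_injective : Function.Injective (tfourier (I := I)) :=
  Function.LeftInverse.injective tifourier_tfourier

lemma tfourier_tconv (X Y : TS I) (i : G I) :
    tfourier (tconv X Y) i = tfourier X i * tfourier Y i := by
  simp only [tfourier_eq_sum, tconv, Finset.sum_mul, Finset.mul_sum]
  rw [Finset.sum_comm]
  refine Finset.sum_congr rfl fun j _ => ?_
  rw [← Equiv.sum_comp (Equiv.addRight j)]
  refine Finset.sum_congr rfl fun k _ => ?_
  simp only [Equiv.coe_addRight, add_sub_cancel_right, tchar_add_right]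
  ring

lemma tfourier_tconj (X : TS I) (i : G I) : tfourier (tconj X) i = conj (tfourier X i) := by
  simp only [tfourier_eq_sum, map_sum, map_mul]
  rw [← Equiv.sum_comp (Equiv.neg (G I))]
  refine Finset.sum_congr rfl fun j _ => ?_
  simp [tconj, tchar_comm i, tchar_neg_left]

lemma tfourier_ET (i : G I) : tfourier (ET : TS I) i = 1 := by
  simp [tfourier_eq_sum, ET, tchar]

lemma tfourier_ZT (i : G I) : tfourier (ZT : TS I) i = 0 := by
  simp [tfourier_eq_sum, ZT]

lemma tfourier_sum {κ : Type*} (s : Finset κ) (X : κ → TS I) (i : G I) :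
    tfourier (∑ k ∈ s, X k) i = ∑ k ∈ s, tfourier (X k) i := by
  simp only [tfourier_eq_sum, Finset.sum_apply, Finset.sum_mul]
  exact Finset.sum_comm

lemma tNonneg_tifourier_ofReal (r : G I → ℝ) (hr : 0 ≤ r) :
    TNonneg (tifourier fun i => (r i : ℂ)) := by
  refine ⟨tifourier fun i => (√(r i) : ℂ), tfourier_injective ?_, tfourier_injective ?_⟩ <;>
    funext i
  · rw [tfourier_tconj, tfourier_tifourier, Complex.conj_ofReal]
  · rw [tfourier_tconv, tfourier_tifourier, tfourier_tifourier, ← Complex.ofReal_mul,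
      Real.mul_self_sqrt (hr i)]

section Slices

open Matrix

variable {a b c : ℕ}

lemma fslice_tmul (A : Matrix (Fin a) (Fin b) (TS I)) (B : Matrix (Fin b) (Fin c) (TS I))
    (i : G I) : fslice (tmul A B) i = fslice A i * fslice B i := by
  ext α γ
  simp only [fslice, tmul, Matrix.of_apply, Matrix.mul_apply, tfourier_sum, tfourier_tconv]

lemma fslice_htrans (A : Matrix (Fin a) (Fin b) (TS I)) (i : G I) :
    fslice (htrans A) i = (fslice A i)ᴴ := by
  ext β α
  simp only [fslice, htrans, Matrix.of_apply, Matrix.conjTranspose_apply, tfourier_tconj]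
  rfl

lemma fslice_tId (Q : ℕ) (i : G I) : fslice (tId Q : Matrix (Fin Q) (Fin Q) (TS I)) i = 1 := by
  ext k l
  simp only [fslice, tId, Matrix.of_apply, Matrix.one_apply, apply_ite (tfourier · i),
    tfourier_ET, tfourier_ZT]

lemma fslice_tdiag {Q : ℕ} (lam : Fin Q → TS I) (i : G I) :
    fslice (tdiag lam) i = Matrix.diagonal fun k => tfourier (lam k) i := by
  ext k l
  simp only [fslice, tdiag, Matrix.of_apply, Matrix.diagonal_apply, apply_ite (tfourier · i),
    tfourier_ZT]

lemma ext_fslice {A B : Matrix (Fin a) (Fin b) (TS I)} (h : ∀ i, fslice A i = fslice B i) :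
    A = B :=
  Matrix.ext fun α β => tfourier_injective <| funext fun i => congr_fun₂ (h i) α β

def ofSlices (M : G I → Matrix (Fin a) (Fin b) ℂ) : Matrix (Fin a) (Fin b) (TS I) :=
  Matrix.of fun α β => tifourier fun i => M i α β

lemma fslice_ofSlices (M : G I → Matrix (Fin a) (Fin b) ℂ) (i : G I) :
    fslice (ofSlices M) i = M i := by
  ext α β
  simp only [fslice, ofSlices, Matrix.of_apply, tfourier_tifourier]

end Slices

/-- every t-matrix admits a tensor singular value decomposition. -/
theorem tsvd_exists (N : ℕ) (I : Fin N → ℕ) [∀ n, NeZero (I n)]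
    (D₁ D₂ : ℕ) (X : Matrix (Fin D₁) (Fin D₂) (TS I)) :
    ∃ (U : Matrix (Fin D₁) (Fin (min D₁ D₂)) (TS I))
      (V : Matrix (Fin D₂) (Fin (min D₁ D₂)) (TS I))
      (lam : Fin (min D₁ D₂) → TS I),
      X = tmul U (tmul (tdiag lam) (htrans V)) ∧
      tmul (htrans U) U = tId (min D₁ D₂) ∧
      tmul (htrans V) V = tId (min D₁ D₂) ∧
      (∀ k, TNonneg (lam k)) ∧
      (∀ k l : Fin (min D₁ D₂), k ≤ l →
        ∀ i, (tfourier (lam l) i).re ≤ (tfourier (lam k) i).re) ∧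
      (∀ k, ∀ i, 0 ≤ (tfourier (lam k) i).re) := by
  choose U V σ hX hU hV hσ hσ0 using fun i : G I => Matrix.exists_svd (fslice X i)
  refine ⟨ofSlices U, ofSlices V, fun k => tifourier fun i => (σ i k : ℂ), ext_fslice fun i => ?_,
    ext_fslice fun i => ?_, ext_fslice fun i => ?_,
    fun k => tNonneg_tifourier_ofReal (σ · k) fun i => hσ0 i k, fun k l hkl i => ?_, fun k i => ?_⟩
  · rw [fslice_tmul, fslice_tmul, fslice_tdiag, fslice_htrans, fslice_ofSlices, fslice_ofSlices,
      ← Matrix.mul_assoc, hX i]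
    simp only [tfourier_tifourier]
    -- the two sides differ only in `RCLike.ofReal` versus `Complex.ofReal`, which agree by `rfl`
    rfl
  · rw [fslice_tmul, fslice_htrans, fslice_ofSlices, fslice_tId, hU i]
  · rw [fslice_tmul, fslice_htrans, fslice_ofSlices, fslice_tId, hV i]
  · simpa only [tfourier_tifourier, Complex.ofReal_re] using hσ i hkl
  · simpa only [tfourier_tifourier, Complex.ofReal_re, Pi.zero_apply] using hσ0 i k
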